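/- Let c, D > 0 and let G be a finite Borel measure on [0,∞) with G([0, c/(2D)]) = 0. Then for every t ≥ 0 and every L ∈ ℕ, Σ_{l=L}^∞ (2l+1)·C_l(t,t) ≤ (1 + c²t/(2D))²·exp(−c²t/D)·Σ_{l=L}^∞ (2l+1)·C_l. (Equivalently, ‖T_H(·,t) − T_{H,L}(·,t)‖_{L²(Ω×S²)} ≤ (1/(2√π))·(1 + c²t/(2D))·exp(−c²t/(2D))·(Σ_{l=L}^∞(2l+1)C_l)^{1/2}.) -/

import Mathlib

open MeasureTheory Real Set

/-- `H̃₁(μ,t)` for the subcritical regime `0 ≤ μ < c/(2D)`. -/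
noncomputable def Htilde1 (c D μ t : ℝ) : ℝ :=
  Real.exp (-(c ^ 2 * t) / (2 * D)) *
    (Real.cosh (c * t * Real.sqrt (c ^ 2 / (4 * D ^ 2) - μ ^ 2)) +
      c / (2 * D * Real.sqrt (c ^ 2 / (4 * D ^ 2) - μ ^ 2)) *
        Real.sinh (c * t * Real.sqrt (c ^ 2 / (4 * D ^ 2) - μ ^ 2)))

/-- `H̃₂(μ,t)` for the supercritical regime `μ > c/(2D)`. -/
noncomputable def Htilde2 (c D μ t : ℝ) : ℝ :=
  Real.exp (-(c ^ 2 * t) / (2 * D)) *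
    (Real.cos (c * t * Real.sqrt (μ ^ 2 - c ^ 2 / (4 * D ^ 2))) +
      c / (2 * D * Real.sqrt (μ ^ 2 - c ^ 2 / (4 * D ^ 2))) *
        Real.sin (c * t * Real.sqrt (μ ^ 2 - c ^ 2 / (4 * D ^ 2))))

/-- `H̃(μ,t)`, pieced together from `H̃₁`, the value at `μ = c/(2D)`, and `H̃₂`. -/
noncomputable def Htilde (c D μ t : ℝ) : ℝ :=
  if μ < c / (2 * D) then Htilde1 c D μ t
  else if μ = c / (2 * D) then Real.exp (-(c ^ 2 * t) / (2 * D)) * (1 + c ^ 2 * t / (2 * D))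
  else Htilde2 c D μ t

/-- Bessel function of the first kind of real order `ν`, via its power series
(with real powers; for `ν > 0` this gives `besselJ ν 0 = 0`). -/
noncomputable def besselJ (ν x : ℝ) : ℝ :=
  ∑' n : ℕ, ((-1 : ℝ) ^ n / (n.factorial * Real.Gamma ((n : ℝ) + ν + 1))) *
    (x / 2) ^ (2 * (n : ℝ) + ν)

/-- The integrand `J_{l+1/2}(μ)² / μ`, with its value at `μ = 0` defined by
continuous extension (`2/π` for `l = 0`, `0` for `l ≥ 1`). -/
noncomputable def besselInt (l : ℕ) (μ : ℝ) : ℝ :=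
  if μ = 0 then (if l = 0 then 2 / Real.pi else 0)
  else besselJ ((l : ℝ) + 1 / 2) μ ^ 2 / μ

/-- Angular power spectrum `C_l(t,t')` of the spherical hyperbolic diffusion field. -/
noncomputable def Cl (c D : ℝ) (G : MeasureTheory.Measure ℝ) (l : ℕ) (t t' : ℝ) : ℝ :=
  2 * Real.pi ^ 2 * ∫ μ in Set.Ici (0 : ℝ), besselInt l μ * Htilde c D μ t * Htilde c D μ t' ∂G

/-!
Above the threshold `c/(2D)` every mode is a damped oscillation,
`H̃₂(μ,t) = e^{-c²t/(2D)} (cos(ωt) + (c/(2Dω)) sin(ωt))`, and `|sin(ωt)| ≤ ωt` cancels the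
`1/ω`, so `|H̃₂(μ,t)| ≤ (1 + c²t/(2D)) e^{-c²t/(2D)}` uniformly in `μ`, while `H̃(μ,0) = 1`.
As `G` lives on `(c/(2D), ∞)`, this gives `C_l(t,t) ≤ (1 + c²t/(2D))² e^{-c²t/D} C_l` for every
`l`, and the tail sums compare termwise. The only analytic input is that `C_l` is a genuine
integral: `J_{l+1/2}` is bounded on `[a, ∞)` for `a > 0`, which follows from
`J_{±1/2}(x) = (2/(πx))^{1/2} (cos x, sin x)` and the recurrence
`J_{ν-1} + J_{ν+1} = (2ν/x) J_ν`.
-/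

open Nat Filter

noncomputable def besselJTerm (ν : ℝ) (n : ℕ) (x : ℝ) : ℝ :=
  ((-1 : ℝ) ^ n / (n ! * Real.Gamma ((n : ℝ) + ν + 1))) * (x / 2) ^ (2 * (n : ℝ) + ν)

theorem besselJ_eq_tsum_besselJTerm (ν x : ℝ) : besselJ ν x = ∑' n, besselJTerm ν n x := rfl

theorem besselJTerm_succ {ν x : ℝ} (hν : -1 < ν) (hx : x ≠ 0) (n : ℕ) :
    besselJTerm ν (n + 1) x = -((x / 2) ^ 2 / ((n + 1) * (n + ν + 1))) * besselJTerm ν n x := by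
  have hn : (0 : ℝ) < n + ν + 1 := by linarith [(n.cast_nonneg : (0 : ℝ) ≤ n)]
  have hΓ := Real.Gamma_pos_of_pos hn
  rw [besselJTerm, besselJTerm, factorial_succ,
    show ((n + 1 : ℕ) : ℝ) + ν + 1 = (n + ν + 1) + 1 by push_cast; ring,
    show 2 * ((n + 1 : ℕ) : ℝ) + ν = 2 * n + ν + (2 : ℕ) by push_cast; ring,
    Real.Gamma_add_one hn.ne', Real.rpow_add_natCast (by positivity)]
  push_cast
  field_simp
  ring

theorem summable_besselJTerm {ν : ℝ} (hν : -1 < ν) (x : ℝ) :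
    Summable (fun n => besselJTerm ν n x) := by
  rcases eq_or_ne x 0 with rfl | hx
  · refine summable_of_ne_finset_zero (s := {0}) fun n hn => ?_
    have hn : (1 : ℝ) ≤ n := by exact_mod_cast Nat.one_le_iff_ne_zero.2 (by simpa using hn)
    rw [besselJTerm, zero_div, Real.zero_rpow (by linarith), mul_zero]
  refine summable_of_ratio_norm_eventually_le (r := 1 / 2) (by norm_num) ?_
  filter_upwards [eventually_ge_atTop ⌈x ^ 2⌉₊] with n hn
  have hn : x ^ 2 ≤ n := (Nat.le_ceil _).trans (by exact_mod_cast hn)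
  have hden : 0 < ((n : ℝ) + 1) * (n + ν + 1) := by nlinarith
  have hratio : (x / 2) ^ 2 / ((n + 1) * (n + ν + 1)) ≤ 1 / 2 := by
    rw [div_le_iff₀ hden]
    nlinarith
  rw [besselJTerm_succ hν hx, norm_mul, norm_neg, Real.norm_of_nonneg (by positivity)]
  gcongr

theorem measurable_besselJ {ν : ℝ} (hν : -1 < ν) : Measurable (besselJ ν) := by
  have hterm (n : ℕ) : Measurable (besselJTerm ν n) :=
    ((measurable_id.div_const 2).pow_const _).const_mul _
  exact measurable_of_tendsto_metrizable' atTop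
    (fun k => Finset.measurable_sum _ fun n _ => hterm n)
    (tendsto_pi_nhds.2 fun x => (summable_besselJTerm hν x).hasSum.tendsto_sum_nat)

theorem besselJTerm_sub_one_zero {ν x : ℝ} (hν : 0 < ν) (hx : x ≠ 0) :
    besselJTerm (ν - 1) 0 x = (2 * ν / x) * besselJTerm ν 0 x := by
  have hx2 : x / 2 ≠ 0 := by simpa using hx
  have := (Real.Gamma_pos_of_pos hν).ne'
  simp only [besselJTerm, Nat.cast_zero, factorial_zero, Nat.cast_one, pow_zero]
  rw [show 2 * (0 : ℝ) + (ν - 1) = ν - 1 by ring, show (0 : ℝ) + (ν - 1) + 1 = ν by ring,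
    show 2 * (0 : ℝ) + ν = (ν - 1) + 1 by ring, show (0 : ℝ) + ν + 1 = ν + 1 by ring,
    Real.rpow_add_one hx2, Real.Gamma_add_one hν.ne']
  field_simp

theorem besselJTerm_sub_one_succ_add {ν x : ℝ} (hν : 0 < ν) (hx : x ≠ 0) (m : ℕ) :
    besselJTerm (ν - 1) (m + 1) x + besselJTerm (ν + 1) m x =
      (2 * ν / x) * besselJTerm ν (m + 1) x := by
  have hx2 : x / 2 ≠ 0 := by simpa using hx
  have hpos : (0 : ℝ) < m + ν + 1 := by positivity
  have := (Real.Gamma_pos_of_pos hpos).ne'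
  simp only [besselJTerm, Nat.cast_add, Nat.cast_one]
  rw [show 2 * ((m : ℝ) + 1) + (ν - 1) = 2 * m + (ν + 1) by ring,
    show (m : ℝ) + 1 + (ν - 1) + 1 = m + ν + 1 by ring,
    show (m : ℝ) + (ν + 1) + 1 = (m + ν + 1) + 1 by ring,
    show 2 * ((m : ℝ) + 1) + ν = (2 * m + (ν + 1)) + 1 by ring,
    show (m : ℝ) + 1 + ν + 1 = (m + ν + 1) + 1 by ring,
    Real.rpow_add_one hx2, Real.Gamma_add_one hpos.ne', factorial_succ, pow_succ]
  push_cast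
  field_simp
  ring

theorem besselJ_sub_one_add_besselJ_add_one {ν x : ℝ} (hν : 0 < ν) (hx : x ≠ 0) :
    besselJ (ν - 1) x + besselJ (ν + 1) x = (2 * ν / x) * besselJ ν x := by
  have hsub := summable_besselJTerm (ν := ν - 1) (by linarith) x
  have hadd := summable_besselJTerm (ν := ν + 1) (by linarith) x
  have hmid := summable_besselJTerm (ν := ν) (by linarith) x
  rw [besselJ_eq_tsum_besselJTerm, besselJ_eq_tsum_besselJTerm, besselJ_eq_tsum_besselJTerm,
    hsub.tsum_eq_zero_add, hmid.tsum_eq_zero_add, add_assoc,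
    ← ((summable_nat_add_iff 1).2 hsub).tsum_add hadd, mul_add, ← tsum_mul_left,
    besselJTerm_sub_one_zero hν hx]
  simp only [besselJTerm_sub_one_succ_add hν hx]
theorem factorial_mul_Gamma_nat_add_half (n : ℕ) :
    (n ! : ℝ) * Real.Gamma (n + 1 / 2) = (2 * n)! * √π / 4 ^ n := by
  have h := Real.Gamma_mul_Gamma_add_half ((n : ℝ) + 1 / 2)
  rw [show (n : ℝ) + 1 / 2 + 1 / 2 = n + 1 by ring, show (1 : ℝ) - 2 * (n + 1 / 2) = -(2 * n : ℕ) by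
    push_cast; ring, show 2 * ((n : ℝ) + 1 / 2) = (2 * n : ℕ) + 1 by push_cast; ring,
    Real.Gamma_nat_eq_factorial, Real.Gamma_nat_eq_factorial, Real.rpow_neg (by norm_num),
    Real.rpow_natCast, pow_mul] at h
  rw [mul_comm, h]
  field_simp
  norm_num

theorem besselJTerm_neg_half {x : ℝ} (hx : 0 < x) (n : ℕ) :
    besselJTerm (-(1 / 2)) n x = (√π * √(x / 2))⁻¹ * ((-1) ^ n * x ^ (2 * n) / (2 * n)!) := by
  have hx2 : 0 < x / 2 := by positivity
  rw [besselJTerm, show (n : ℝ) + -(1 / 2) + 1 = n + 1 / 2 by ring,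
    show 2 * (n : ℝ) + -(1 / 2) = (2 * n : ℕ) + -(1 / 2) by push_cast; ring,
    factorial_mul_Gamma_nat_add_half, Real.rpow_add hx2, Real.rpow_natCast,
    Real.rpow_neg hx2.le, ← Real.sqrt_eq_rpow, div_pow, pow_mul]
  have := Real.sqrt_pos.2 hx2
  field_simp
  rw [pow_mul]
  norm_num

theorem besselJTerm_half {x : ℝ} (hx : 0 < x) (n : ℕ) :
    besselJTerm (1 / 2) n x = (√π * √(x / 2))⁻¹ * ((-1) ^ n * x ^ (2 * n + 1) / (2 * n + 1)!) := by
  have hx2 : 0 < x / 2 := by positivity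
  have hΓ : (n ! : ℝ) * Real.Gamma (n + 1 / 2 + 1) = (2 * n + 1)! * √π / (2 * 4 ^ n) := by
    rw [Real.Gamma_add_one (by positivity), mul_left_comm, factorial_mul_Gamma_nat_add_half,
      factorial_succ]
    push_cast
    field_simp
  rw [besselJTerm, hΓ, show 2 * (n : ℝ) + 1 / 2 = (2 * n : ℕ) + 1 / 2 by push_cast; ring,
    Real.rpow_add hx2, Real.rpow_natCast, ← Real.sqrt_eq_rpow, div_pow, pow_mul]
  have := Real.sqrt_pos.2 hx2
  field_simp
  rw [Real.sq_sqrt hx2.le, pow_succ x (2 * n), pow_mul, pow_mul]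
  ring

theorem besselJ_neg_half {x : ℝ} (hx : 0 < x) :
    besselJ (-(1 / 2)) x = (√π * √(x / 2))⁻¹ * Real.cos x := by
  rw [besselJ_eq_tsum_besselJTerm, Real.cos_eq_tsum, ← tsum_mul_left]
  exact tsum_congr (besselJTerm_neg_half hx)

theorem besselJ_half {x : ℝ} (hx : 0 < x) :
    besselJ (1 / 2) x = (√π * √(x / 2))⁻¹ * Real.sin x := by
  rw [besselJ_eq_tsum_besselJTerm, Real.sin_eq_tsum, ← tsum_mul_left]
  exact tsum_congr (besselJTerm_half hx)

theorem abs_inv_sqrt_mul_le {a x y : ℝ} (ha : 0 < a) (hx : a ≤ x) (hy : |y| ≤ 1) :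
    |(√π * √(x / 2))⁻¹ * y| ≤ (√π * √(a / 2))⁻¹ := by
  have : 0 < √(a / 2) := Real.sqrt_pos.2 (by positivity)
  have : 0 < √(x / 2) := Real.sqrt_pos.2 (by linarith)
  rw [abs_mul, abs_of_pos (by positivity)]
  calc (√π * √(x / 2))⁻¹ * |y| ≤ (√π * √(x / 2))⁻¹ := mul_le_of_le_one_right (by positivity) hy
    _ ≤ (√π * √(a / 2))⁻¹ := by gcongr

theorem exists_abs_besselJ_nat_sub_half_le {a : ℝ} (ha : 0 < a) (k : ℕ) :
    ∃ C, ∀ x, a ≤ x → |besselJ (k - 1 / 2) x| ≤ C := by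
  induction k using Nat.twoStepInduction with
  | zero =>
    refine ⟨(√π * √(a / 2))⁻¹, fun x hx => ?_⟩
    rw [Nat.cast_zero, zero_sub, besselJ_neg_half (ha.trans_le hx)]
    exact abs_inv_sqrt_mul_le ha hx (Real.abs_cos_le_one x)
  | one =>
    refine ⟨(√π * √(a / 2))⁻¹, fun x hx => ?_⟩
    rw [Nat.cast_one, show (1 : ℝ) - 1 / 2 = 1 / 2 by norm_num, besselJ_half (ha.trans_le hx)]
    exact abs_inv_sqrt_mul_le ha hx (Real.abs_sin_le_one x)
  | more m ih₀ ih₁ =>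
    obtain ⟨C₀, hC₀⟩ := ih₀
    obtain ⟨C₁, hC₁⟩ := ih₁
    set ν : ℝ := ((m + 1 : ℕ) : ℝ) - 1 / 2
    have hν : 0 < ν := by push_cast [ν]; linarith [(m.cast_nonneg : (0 : ℝ) ≤ m)]
    refine ⟨2 * ν / a * C₁ + C₀, fun x hx => ?_⟩
    have hx0 : 0 < x := ha.trans_le hx
    have hrec := besselJ_sub_one_add_besselJ_add_one hν hx0.ne'
    rw [show ν - 1 = m - 1 / 2 by push_cast [ν]; ring,
      show ν + 1 = ((m + 2 : ℕ) : ℝ) - 1 / 2 by push_cast [ν]; ring] at hrec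
    rw [eq_sub_of_add_eq' hrec]
    calc |2 * ν / x * besselJ ν x - besselJ (m - 1 / 2) x|
        ≤ 2 * ν / x * |besselJ ν x| + |besselJ (m - 1 / 2) x| :=
          (abs_sub _ _).trans_eq (by rw [abs_mul, abs_of_pos (by positivity : 0 < 2 * ν / x)])
      _ ≤ 2 * ν / a * C₁ + C₀ :=
          add_le_add (mul_le_mul (by gcongr) (hC₁ x hx) (abs_nonneg _) (by positivity))
            (hC₀ x hx)

theorem besselInt_nonneg (l : ℕ) {μ : ℝ} (hμ : 0 ≤ μ) : 0 ≤ besselInt l μ := by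
  unfold besselInt
  split_ifs <;> positivity

theorem measurable_besselInt (l : ℕ) : Measurable (besselInt l) :=
  Measurable.ite (measurableSet_singleton 0) measurable_const
    (((measurable_besselJ (neg_one_lt_zero.trans_le (by positivity))).pow_const 2).div
      measurable_id)

theorem exists_besselInt_le (l : ℕ) {a : ℝ} (ha : 0 < a) :
    ∃ C, ∀ μ, a ≤ μ → besselInt l μ ≤ C := by
  obtain ⟨C, hC⟩ := exists_abs_besselJ_nat_sub_half_le ha (l + 1)
  rw [show ((l + 1 : ℕ) : ℝ) - 1 / 2 = l + 1 / 2 by push_cast; ring] at hC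
  refine ⟨C ^ 2 / a, fun μ hμ => ?_⟩
  have hJ : besselJ ((l : ℝ) + 1 / 2) μ ^ 2 ≤ C ^ 2 := by
    rw [← sq_abs]
    exact pow_le_pow_left₀ (abs_nonneg _) (hC μ hμ) 2
  rw [besselInt, if_neg (ha.trans_le hμ).ne']
  exact div_le_div₀ ((sq_nonneg _).trans hJ) hJ ha hμ

theorem integrable_besselInt {ρ : Measure ℝ} [IsFiniteMeasure ρ] {a : ℝ} (ha : 0 < a)
    (hρ : ∀ᵐ μ ∂ρ, a < μ) (l : ℕ) : Integrable (besselInt l) ρ := by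
  obtain ⟨C, hC⟩ := exists_besselInt_le l ha
  refine .of_bound (measurable_besselInt l).aestronglyMeasurable C ?_
  filter_upwards [hρ] with μ hμ
  rw [Real.norm_of_nonneg (besselInt_nonneg l (ha.trans hμ).le)]
  exact hC μ hμ.le

theorem Htilde_zero (c D μ : ℝ) : Htilde c D μ 0 = 1 := by
  simp [Htilde, Htilde1, Htilde2]

theorem Htilde_of_lt {c D μ : ℝ} (t : ℝ) (hμ : c / (2 * D) < μ) :
    Htilde c D μ t = Htilde2 c D μ t := by
  rw [Htilde, if_neg hμ.not_gt, if_neg hμ.ne']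

theorem abs_Htilde2_le {c D μ t : ℝ} (hc : 0 < c) (hD : 0 < D) (ht : 0 ≤ t)
    (hμ : c / (2 * D) < μ) :
    |Htilde2 c D μ t| ≤ (1 + c ^ 2 * t / (2 * D)) * Real.exp (-(c ^ 2 * t) / (2 * D)) := by
  have hω2 : 0 < μ ^ 2 - c ^ 2 / (4 * D ^ 2) := by
    have : (c / (2 * D)) ^ 2 = c ^ 2 / (4 * D ^ 2) := by ring
    nlinarith [div_pos hc (mul_pos two_pos hD)]
  set ω := √(μ ^ 2 - c ^ 2 / (4 * D ^ 2))
  have hω : 0 < ω := Real.sqrt_pos.2 hω2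
  have hsin : c / (2 * D * ω) * |Real.sin (c * t * ω)| ≤ c ^ 2 * t / (2 * D) :=
    calc c / (2 * D * ω) * |Real.sin (c * t * ω)| ≤ c / (2 * D * ω) * (c * t * ω) := by
          gcongr
          exact Real.abs_sin_le_abs.trans_eq (abs_of_nonneg (by positivity))
      _ = c ^ 2 * t / (2 * D) := by field_simp
  rw [Htilde2, abs_mul, Real.abs_exp, mul_comm]
  gcongr
  calc |Real.cos (c * t * ω) + c / (2 * D * ω) * Real.sin (c * t * ω)|
      ≤ |Real.cos (c * t * ω)| + c / (2 * D * ω) * |Real.sin (c * t * ω)| := by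
        refine (abs_add_le _ _).trans_eq ?_
        rw [abs_mul, abs_of_pos (by positivity : 0 < c / (2 * D * ω))]
    _ ≤ 1 + c ^ 2 * t / (2 * D) := add_le_add (Real.abs_cos_le_one _) hsin

theorem sq_Htilde2_le {c D μ t : ℝ} (hc : 0 < c) (hD : 0 < D) (ht : 0 ≤ t)
    (hμ : c / (2 * D) < μ) :
    Htilde2 c D μ t ^ 2 ≤ (1 + c ^ 2 * t / (2 * D)) ^ 2 * Real.exp (-(c ^ 2 * t) / D) := by
  have hexp : Real.exp (-(c ^ 2 * t) / D) = Real.exp (-(c ^ 2 * t) / (2 * D)) ^ 2 := by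
    rw [← Real.exp_nat_mul]
    congr 1
    field_simp
    ring
  rw [hexp, ← mul_pow, ← sq_abs]
  exact pow_le_pow_left₀ (abs_nonneg _) (abs_Htilde2_le hc hD ht hμ) 2

theorem Cl_le_mul_Cl_zero {c D : ℝ} (hc : 0 < c) (hD : 0 < D) {G : Measure ℝ} [IsFiniteMeasure G]
    (hsupp : G (Icc 0 (c / (2 * D))) = 0) {t : ℝ} (ht : 0 ≤ t) (l : ℕ) :
    Cl c D G l t t ≤
      (1 + c ^ 2 * t / (2 * D)) ^ 2 * Real.exp (-(c ^ 2 * t) / D) * Cl c D G l 0 0 := by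
  set K := (1 + c ^ 2 * t / (2 * D)) ^ 2 * Real.exp (-(c ^ 2 * t) / D)
  have hae : ∀ᵐ μ ∂G.restrict (Ici 0), c / (2 * D) < μ := by
    have hset : {μ | ¬c / (2 * D) < μ} ∩ Ici 0 = Icc 0 (c / (2 * D)) := by
      ext
      simp [and_comm]
    rwa [ae_iff, Measure.restrict_apply' measurableSet_Ici, hset]
  have ha : 0 < c / (2 * D) := by positivity
  have hint := integrable_besselInt ha hae l
  simp only [Cl, Htilde_zero, mul_one]
  rw [mul_left_comm K, ← integral_const_mul K]
  refine mul_le_mul_of_nonneg_left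
    (integral_mono_of_nonneg ?_ (hint.const_mul K) ?_) (by positivity)
  · filter_upwards [hae] with μ hμ
    rw [mul_assoc]
    exact mul_nonneg (besselInt_nonneg l (ha.trans hμ).le) (mul_self_nonneg _)
  · filter_upwards [hae] with μ hμ
    rw [mul_assoc, ← sq, Htilde_of_lt t hμ, mul_comm K]
    exact mul_le_mul_of_nonneg_left (sq_Htilde2_le hc hD ht hμ)
      (besselInt_nonneg l (ha.trans hμ).le)

theorem truncation_tail_decay_high_freq_general
    (c D : ℝ) (hc : 0 < c) (hD : 0 < D)
    (G : MeasureTheory.Measure ℝ) [MeasureTheory.IsFiniteMeasure G]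
    (hsupp : G (Set.Icc 0 (c / (2 * D))) = 0) :
    ∀ t : ℝ, 0 ≤ t → ∀ L : ℕ,
      ∑' l : ℕ, ENNReal.ofReal ((2 * ((L + l : ℕ) : ℝ) + 1) * Cl c D G (L + l) t t)
        ≤ ENNReal.ofReal ((1 + c ^ 2 * t / (2 * D)) ^ 2 * Real.exp (-(c ^ 2 * t) / D)) *
          ∑' l : ℕ, ENNReal.ofReal ((2 * ((L + l : ℕ) : ℝ) + 1) * Cl c D G (L + l) 0 0) := by
  intro t ht L
  rw [← ENNReal.tsum_mul_left]
  refine ENNReal.tsum_le_tsum fun l => ?_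
  rw [← ENNReal.ofReal_mul (by positivity), mul_left_comm]
  exact ENNReal.ofReal_le_ofReal
    (mul_le_mul_of_nonneg_left (Cl_le_mul_Cl_zero hc hD hsupp ht (L + l)) (by positivity))

/-- If `G([0, c/(2D)]) = 0`, then
`Σ_{l≥L}(2l+1)C_l(t,t) ≤ (1 + c²t/(2D))²·exp(−c²t/D)·Σ_{l≥L}(2l+1)C_l`
for all `t ≥ 0` and all `L` (stated in `ℝ≥0∞`). -/
theorem truncation_tail_decay_high_freq
    (c D : ℝ) (hc : 0 < c) (hD : 0 < D)
    (G : MeasureTheory.Measure ℝ) [MeasureTheory.IsFiniteMeasure G]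
    (hG0 : G (Set.Iio 0) = 0) (hsupp : G (Set.Icc 0 (c / (2 * D))) = 0) :
    ∀ t : ℝ, 0 ≤ t → ∀ L : ℕ,
      ∑' l : ℕ, ENNReal.ofReal ((2 * ((L + l : ℕ) : ℝ) + 1) * Cl c D G (L + l) t t)
        ≤ ENNReal.ofReal ((1 + c ^ 2 * t / (2 * D)) ^ 2 * Real.exp (-(c ^ 2 * t) / D)) *
          ∑' l : ℕ, ENNReal.ofReal ((2 * ((L + l : ℕ) : ℝ) + 1) * Cl c D G (L + l) 0 0) :=
  truncation_tail_decay_high_freq_general c D hc hD G hsupp
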